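/- arXiv:2310.08066 — 4 statements merged into one kernel-verified Lean document; each statement's English description precedes it below -/
import Mathlib

section
/- For all real numbers a, b, c, d with b = 0, c = 0, 0 ≤ a ≤ 1, and 0 ≤ d ≤ 1, the quantity min over α ∈ [0,1] of max{α·a + (1−α)·b, α·c + (1−α)·d} is at most 1/2, and the bound 1/2 is attained when a = d = 1. -/
open Set

lemma sInf_image_max_mul_le_half {a d : ℝ} (ha : a ≤ 1) (hd : d ≤ 1) :
    sInf ((fun α => max (α * a) ((1 - α) * d)) '' Icc 0 1) ≤ 1 / 2 := by
  have hbdd : BddBelow ((fun α : ℝ => max (α * a) ((1 - α) * d)) '' Icc 0 1) :=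
    isCompact_Icc.bddBelow_image (by fun_prop)
  calc sInf ((fun α => max (α * a) ((1 - α) * d)) '' Icc 0 1)
      ≤ max (1 / 2 * a) ((1 - 1 / 2) * d) := csInf_le hbdd ⟨1 / 2, by norm_num, rfl⟩
    _ ≤ 1 / 2 := max_le (by linarith) (by linarith)

lemma isLeast_image_max_self_one_sub :
    IsLeast ((fun α : ℝ => max α (1 - α)) '' Icc 0 1) (1 / 2) := by
  refine ⟨⟨1 / 2, by norm_num, by norm_num⟩, ?_⟩
  rintro _ ⟨α, -, rfl⟩
  linarith [le_max_left α (1 - α), le_max_right α (1 - α)]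

theorem stmt8 (a b c d : ℝ) (hb : b = 0) (hc : c = 0)
    (ha : a ∈ Set.Icc (0 : ℝ) 1) (hd : d ∈ Set.Icc (0 : ℝ) 1) :
    sInf ((fun α => max (α * a + (1 - α) * b) (α * c + (1 - α) * d)) ''
        Set.Icc (0 : ℝ) 1) ≤ 1 / 2 ∧
    (a = 1 → d = 1 →
      sInf ((fun α => max (α * a + (1 - α) * b) (α * c + (1 - α) * d)) ''
        Set.Icc (0 : ℝ) 1) = 1 / 2) := by
  subst hb hc
  simp only [mul_zero, add_zero, zero_add]
  refine ⟨sInf_image_max_mul_le_half ha.2 hd.2, ?_⟩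
  rintro rfl rfl
  simpa only [mul_one] using isLeast_image_max_self_one_sub.csInf_eq
end

section
/- For all real ρ, g, h with ρ ∈ [0,1] and g, h ∈ [0,1] and (2−g−h) > 0, min{ρ(1−g), (1−ρ)(1−h), 2g−1} ≤ 1/3. -/
/-! Bounding `ρ (1 - g)` by `1 - g` removes `ρ` and `h`, and then the minimum of `1 - g` and
`2 g - 1` is at most their weighted average `(2 (1 - g) + (2 g - 1)) / 3 = 1 / 3`. -/

theorem min_one_sub_two_mul_sub_one_le (g : ℝ) : min (1 - g) (2 * g - 1) ≤ 1 / 3 := by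
  linarith [min_le_left (1 - g) (2 * g - 1), min_le_right (1 - g) (2 * g - 1)]

theorem stmt17_general (ρ g h : ℝ) (hρ : ρ ∈ Set.Icc (0 : ℝ) 1)
    (hg : g ∈ Set.Icc (0 : ℝ) 1) :
    min (ρ * (1 - g)) (min ((1 - ρ) * (1 - h)) (2 * g - 1)) ≤ 1 / 3 := by
  have hρg : ρ * (1 - g) ≤ 1 - g := mul_le_of_le_one_left (by linarith [hg.2]) hρ.2
  calc min (ρ * (1 - g)) (min ((1 - ρ) * (1 - h)) (2 * g - 1))
      ≤ min (ρ * (1 - g)) (2 * g - 1) := min_le_min_left _ (min_le_right _ _)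
    _ ≤ min (1 - g) (2 * g - 1) := min_le_min_right _ hρg
    _ ≤ 1 / 3 := min_one_sub_two_mul_sub_one_le g

theorem stmt17 (ρ g h : ℝ) (hρ : ρ ∈ Set.Icc (0 : ℝ) 1)
    (hg : g ∈ Set.Icc (0 : ℝ) 1) (hh : h ∈ Set.Icc (0 : ℝ) 1)
    (hden : 0 < 2 - g - h) :
    min (ρ * (1 - g)) (min ((1 - ρ) * (1 - h)) (2 * g - 1)) ≤ 1 / 3 :=
  stmt17_general ρ g h hρ hg
end

section
/- For all real k, i ∈ [0,1] with 2i + 1 − k > 0: if k + i < 2/3 then i(k+1)/(2i+1−k) < 1/3, and if k + i ≥ 2/3 then (3 − 2k + i − √((3−2k+i)² − 8(1−k)))/4 ≤ 1/3, where the discriminant (3−2k+i)² − 8(1−k) is nonnegative for all k, i ∈ [0,1]. -/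
/-! The second claim clears the denominator to `3ik + k + i < 1`, which follows from
`3ik ≤ 3(k+i)²/4` (AM–GM). The expression in the third claim is the smaller root of
`2x² - (3 - 2k + i)x + (1 - k)`, and this quadratic is `≤ 0` at `x = 1/3` exactly when
`k + i ≥ 2/3`, so `1/3` lies between its roots. -/

lemma smaller_root_le_of_quadratic_nonpos {a b c r : ℝ} (ha : 0 < a)
    (h : a * r ^ 2 - b * r + c ≤ 0) :
    (b - √(b ^ 2 - 4 * a * c)) / (2 * a) ≤ r := by
  have hsq : (b - 2 * a * r) ^ 2 ≤ b ^ 2 - 4 * a * c := by nlinarith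
  have hroot : b - 2 * a * r ≤ √(b ^ 2 - 4 * a * c) :=
    (le_abs_self _).trans (Real.abs_le_sqrt hsq)
  rw [div_le_iff₀ (by positivity)]
  linarith

lemma regret_discrim_nonneg {k i : ℝ} (hk : k ≤ 1) (hi : 0 ≤ i) :
    0 ≤ (3 - 2 * k + i) ^ 2 - 8 * (1 - k) := by
  have hsplit : (3 - 2 * k + i) ^ 2 - 8 * (1 - k) = (2 * k - 1) ^ 2 + i * (6 - 4 * k + i) := by
    ring
  rw [hsplit]
  exact add_nonneg (sq_nonneg _) (mul_nonneg hi (by linarith))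

lemma regret_ratio_lt_third {k i : ℝ} (hk : 0 ≤ k) (hi : 0 ≤ i) (h : k + i < 2 / 3) :
    i * (k + 1) / (2 * i + 1 - k) < 1 / 3 := by
  have hamgm : 4 * (i * k) ≤ (k + i) ^ 2 := by nlinarith [sq_nonneg (k - i)]
  have hsq : (k + i) ^ 2 ≤ 2 / 3 * (k + i) := by nlinarith [add_nonneg hk hi]
  rw [div_lt_iff₀ (by linarith)]
  linarith

theorem stmt18_general (k i : ℝ) (hk : k ∈ Set.Icc (0 : ℝ) 1)
    (hi : i ∈ Set.Icc (0 : ℝ) 1) :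
    0 ≤ (3 - 2 * k + i) ^ 2 - 8 * (1 - k) ∧
    (k + i < 2 / 3 → i * (k + 1) / (2 * i + 1 - k) < 1 / 3) ∧
    (2 / 3 ≤ k + i →
      (3 - 2 * k + i - Real.sqrt ((3 - 2 * k + i) ^ 2 - 8 * (1 - k))) / 4 ≤ 1 / 3) := by
  obtain ⟨hk0, hk1⟩ := hk
  obtain ⟨hi0, -⟩ := hi
  refine ⟨regret_discrim_nonneg hk1 hi0, regret_ratio_lt_third hk0 hi0, fun h => ?_⟩
  have hroot := smaller_root_le_of_quadratic_nonpos (a := 2) (b := 3 - 2 * k + i) (c := 1 - k)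
    (r := 1 / 3) two_pos (by linarith)
  simpa only [show (4 : ℝ) * 2 * (1 - k) = 8 * (1 - k) by ring,
    show (2 : ℝ) * 2 = 4 by norm_num] using hroot

theorem stmt18 (k i : ℝ) (hk : k ∈ Set.Icc (0 : ℝ) 1)
    (hi : i ∈ Set.Icc (0 : ℝ) 1) (hden : 0 < 2 * i + 1 - k) :
    0 ≤ (3 - 2 * k + i) ^ 2 - 8 * (1 - k) ∧
    (k + i < 2 / 3 → i * (k + 1) / (2 * i + 1 - k) < 1 / 3) ∧
    (2 / 3 ≤ k + i →
      (3 - 2 * k + i - Real.sqrt ((3 - 2 * k + i) ^ 2 - 8 * (1 - k))) / 4 ≤ 1 / 3) :=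
  stmt18_general k i hk hi
end

section
/- Consider the 3×3 bimatrix game with R = [[0,0,0],[0,0,1],[1/3,2/3,2/3]] and C = [[0,1/3,1/3],[0,0,1/3],[0,1,2/3]], and let x_s = y_s = e₁, w = z = e₃. Then min over α, β ∈ [0,1] of f(α x_s + (1−α)w, β y_s + (1−β)z) = 1/3, where f(x,y) = max{max{Ry} − xᵀRy, max{Cᵀx} − xᵀCy}. -/
/-
Along the segment x = (a, 0, 1-a), y = (b, 0, 1-b) the column player's regret is
3 f_C = 1 - a + b(2 - a), while the row player's regret is at least each of the two lower bounds
3 f_R ≥ 1 - 2b + a(2 - b) (best reply e₂) and 3 f_R ≥ a(2 - b) (best reply e₃).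
Averaging f_C with the first gives 1/3 + a(1 - 2b)/6, averaging it with the second gives
1/3 + (1 - a)(2b - 1)/6; so for b ≤ 1/2, resp. b ≥ 1/2, one of the averages, hence max{f_R, f_C},
is at least 1/3. At a = b = 1 both regrets equal 1/3.
-/

open Matrix

noncomputable def fR {m n : ℕ} (R : Matrix (Fin m) (Fin n) ℝ)
    (x : Fin m → ℝ) (y : Fin n → ℝ) : ℝ :=
  (⨆ i, R.mulVec y i) - x ⬝ᵥ R.mulVec y

noncomputable def fC {m n : ℕ} (C : Matrix (Fin m) (Fin n) ℝ)
    (x : Fin m → ℝ) (y : Fin n → ℝ) : ℝ :=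
  (⨆ j, C.transpose.mulVec x j) - x ⬝ᵥ C.mulVec y

noncomputable def Rmat : Matrix (Fin 3) (Fin 3) ℝ :=
  !![0, 0, 0; 0, 0, 1; 1/3, 2/3, 2/3]

noncomputable def Cmat : Matrix (Fin 3) (Fin 3) ℝ :=
  !![0, 1/3, 1/3; 0, 0, 1/3; 0, 1, 2/3]

/-- mix t e₁ (1-t) e₃ -/
noncomputable def mix (t : ℝ) : Fin 3 → ℝ :=
  t • (Pi.single 0 1 : Fin 3 → ℝ) + (1 - t) • (Pi.single 2 1 : Fin 3 → ℝ)

lemma ciSup_fin_three {α : Type*} [ConditionallyCompleteLattice α] (f : Fin 3 → α) :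
    ⨆ i, f i = f 0 ⊔ f 1 ⊔ f 2 := by
  have hbdd : BddAbove (Set.range f) := (Set.finite_range f).bddAbove
  refine le_antisymm (ciSup_le fun i => ?_) ?_
  · fin_cases i
    · exact le_sup_left.trans le_sup_left
    · exact le_sup_right.trans le_sup_left
    · exact le_sup_right
  · exact sup_le (sup_le (le_ciSup hbdd 0) (le_ciSup hbdd 1)) (le_ciSup hbdd 2)

lemma mix_eq (t : ℝ) : mix t = ![t, 0, 1 - t] := by
  ext i
  fin_cases i <;> simp [mix]

lemma Rmat_mulVec_mix (b : ℝ) : Rmat *ᵥ mix b = ![0, 1 - b, (2 - b) / 3] := by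
  ext i
  fin_cases i <;> simp [Rmat, mix_eq, mulVec, dotProduct, Fin.sum_univ_three]
  ring

lemma Cmat_mulVec_mix (b : ℝ) : Cmat *ᵥ mix b = ![(1 - b) / 3, (1 - b) / 3, 2 * (1 - b) / 3] := by
  ext i
  fin_cases i <;> simp [Cmat, mix_eq, mulVec, dotProduct, Fin.sum_univ_three] <;> ring

lemma Cmat_transpose_mulVec_mix (a : ℝ) :
    Cmatᵀ *ᵥ mix a = ![0, 1 - 2 * a / 3, (2 - a) / 3] := by
  ext i
  fin_cases i <;> simp [Cmat, mix_eq, mulVec, dotProduct, Fin.sum_univ_three] <;> ring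

lemma fR_mix (a b : ℝ) :
    fR Rmat (mix a) (mix b) = 0 ⊔ (1 - b) ⊔ (2 - b) / 3 - (1 - a) * (2 - b) / 3 := by
  simp only [fR, Rmat_mulVec_mix, ciSup_fin_three]
  simp [mix_eq, dotProduct, Fin.sum_univ_three]
  ring

lemma fC_mix (a b : ℝ) :
    fC Cmat (mix a) (mix b) = 0 ⊔ (1 - 2 * a / 3) ⊔ (2 - a) / 3 - (1 - b) * (2 - a) / 3 := by
  simp only [fC, Cmat_transpose_mulVec_mix, Cmat_mulVec_mix, ciSup_fin_three]
  simp [mix_eq, dotProduct, Fin.sum_univ_three]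
  ring

lemma le_fR_mix_second_row (a b : ℝ) : 1 - b - (1 - a) * (2 - b) / 3 ≤ fR Rmat (mix a) (mix b) := by
  rw [fR_mix]
  gcongr
  exact le_sup_of_le_left le_sup_right

lemma le_fR_mix_third_row (a b : ℝ) : a * (2 - b) / 3 ≤ fR Rmat (mix a) (mix b) := by
  rw [fR_mix]
  linarith [le_sup_right (a := 0 ⊔ (1 - b)) (b := (2 - b) / 3)]

lemma fC_mix_of_le_one {a : ℝ} (ha : a ≤ 1) (b : ℝ) :
    fC Cmat (mix a) (mix b) = 1 - 2 * a / 3 - (1 - b) * (2 - a) / 3 := by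
  have h₀ : (0 : ℝ) ≤ 1 - 2 * a / 3 := by linarith
  have h₁ : (2 - a) / 3 ≤ 1 - 2 * a / 3 := by linarith
  rw [fC_mix, sup_eq_right.2 h₀, sup_eq_left.2 h₁]

lemma one_third_le_max_fR_fC_mix {a : ℝ} (ha : a ∈ Set.Icc (0 : ℝ) 1) (b : ℝ) :
    1 / 3 ≤ max (fR Rmat (mix a) (mix b)) (fC Cmat (mix a) (mix b)) := by
  obtain ⟨ha₀, ha₁⟩ := ha
  set R := fR Rmat (mix a) (mix b)
  set C := fC Cmat (mix a) (mix b)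
  have hC : C = 1 - 2 * a / 3 - (1 - b) * (2 - a) / 3 := fC_mix_of_le_one ha₁ b
  calc 1 / 3 ≤ (R + C) / 2 := ?_
    _ ≤ max R C := by linarith [le_max_left R C, le_max_right R C]
  rcases le_total b (1 / 2) with hb | hb
  · linarith [le_fR_mix_second_row a b, mul_nonneg ha₀ (sub_nonneg.2 hb)]
  · linarith [le_fR_mix_third_row a b, mul_nonneg (sub_nonneg.2 ha₁) (sub_nonneg.2 hb)]

lemma max_fR_fC_mix_one_one : max (fR Rmat (mix 1) (mix 1)) (fC Cmat (mix 1) (mix 1)) = 1 / 3 := by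
  rw [fR_mix, fC_mix]
  norm_num

theorem stmt19 :
    IsLeast
      ((fun p : ℝ × ℝ =>
          max (fR Rmat (mix p.1) (mix p.2)) (fC Cmat (mix p.1) (mix p.2))) ''
        (Set.Icc (0 : ℝ) 1 ×ˢ Set.Icc (0 : ℝ) 1))
      (1 / 3) := by
  constructor
  · exact ⟨(1, 1), ⟨Set.right_mem_Icc.2 zero_le_one, Set.right_mem_Icc.2 zero_le_one⟩,
      max_fR_fC_mix_one_one⟩
  · rintro _ ⟨⟨a, b⟩, ⟨ha, -⟩, rfl⟩
    exact one_third_le_max_fR_fC_mix ha b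
end
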